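/- arXiv:2412.12677 — 3 statements merged into one kernel-verified Lean document; each statement's English description precedes it below -/
import Mathlib

section
/- If S₁, S₂ ⊆ {1,...,M} satisfy |S₁| > M/2 and |S₂| > M/2, then span(D(S₁ ∪ S₂)) = span(D(S₁) ∪ D(S₂)). -/
/-- D(S) = { e_i - e_j : i, j ∈ S, i ≠ j } ⊆ ℝ^M. -/
def Dset (M : ℕ) (S : Finset (Fin M)) : Set (Fin M → ℝ) :=
  {v | ∃ i ∈ S, ∃ j ∈ S, i ≠ j ∧ v = Pi.single i (1 : ℝ) - Pi.single j (1 : ℝ)}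

lemma mem_span_Dset {M : ℕ} (S : Finset (Fin M)) {i k : Fin M} (hi : i ∈ S) (hk : k ∈ S) :
    Pi.single i (1 : ℝ) - Pi.single k (1 : ℝ) ∈ Submodule.span ℝ (Dset M S) := by
  by_cases h : i = k
  · subst h; simp
  · exact Submodule.subset_span ⟨i, hi, k, hk, h, rfl⟩

/-- If |S₁| > M/2 and |S₂| > M/2 then span D(S₁ ∪ S₂) = span (D(S₁) ∪ D(S₂)). -/
theorem stmt8 (M : ℕ) (hM : 1 ≤ M) (S₁ S₂ : Finset (Fin M))
    (h1 : (M : ℝ) / 2 < S₁.card) (h2 : (M : ℝ) / 2 < S₂.card) :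
    Submodule.span ℝ (Dset M (S₁ ∪ S₂)) =
      Submodule.span ℝ (Dset M S₁ ∪ Dset M S₂) := by
  -- the intersection is nonempty
  have hcard : (M : ℝ) < S₁.card + S₂.card := by linarith
  have hcardN : M < S₁.card + S₂.card := by exact_mod_cast hcard
  have hinter : (S₁ ∩ S₂).Nonempty := by
    rw [← Finset.card_pos]
    have h := Finset.card_union_add_card_inter S₁ S₂
    have hle : (S₁ ∪ S₂).card ≤ M := by
      simpa using Finset.card_le_card (Finset.subset_univ (S₁ ∪ S₂))
    omega
  obtain ⟨k, hk⟩ := hinter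
  have hk1 : k ∈ S₁ := (Finset.mem_inter.mp hk).1
  have hk2 : k ∈ S₂ := (Finset.mem_inter.mp hk).2
  apply le_antisymm
  · rw [Submodule.span_le]
    rintro v ⟨i, hi, j, hj, hij, rfl⟩
    have hspan1 : Submodule.span ℝ (Dset M S₁) ≤
        Submodule.span ℝ (Dset M S₁ ∪ Dset M S₂) :=
      Submodule.span_mono Set.subset_union_left
    have hspan2 : Submodule.span ℝ (Dset M S₂) ≤
        Submodule.span ℝ (Dset M S₁ ∪ Dset M S₂) :=
      Submodule.span_mono Set.subset_union_right
    have key : ∀ a b : Fin M, a ∈ S₁ ∪ S₂ → b ∈ S₁ ∪ S₂ →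
        Pi.single a (1 : ℝ) - Pi.single b 1 ∈
          Submodule.span ℝ (Dset M S₁ ∪ Dset M S₂) := by
      intro a b ha hb
      have h1a : Pi.single a (1 : ℝ) - Pi.single k 1 ∈
          Submodule.span ℝ (Dset M S₁ ∪ Dset M S₂) := by
        rcases Finset.mem_union.mp ha with h | h
        · exact hspan1 (mem_span_Dset S₁ h hk1)
        · exact hspan2 (mem_span_Dset S₂ h hk2)
      have h1b : Pi.single k (1 : ℝ) - Pi.single b 1 ∈
          Submodule.span ℝ (Dset M S₁ ∪ Dset M S₂) := by
        rcases Finset.mem_union.mp hb with h | h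
        · exact hspan1 (mem_span_Dset S₁ hk1 h)
        · exact hspan2 (mem_span_Dset S₂ hk2 h)
      have := Submodule.add_mem _ h1a h1b
      simpa using this
    exact key i j hi hj
  · rw [Submodule.span_le]
    rintro v (⟨i, hi, j, hj, hij, rfl⟩ | ⟨i, hi, j, hj, hij, rfl⟩)
    · exact Submodule.subset_span ⟨i, Finset.mem_union_left _ hi, j,
        Finset.mem_union_left _ hj, hij, rfl⟩
    · exact Submodule.subset_span ⟨i, Finset.mem_union_right _ hi, j,
        Finset.mem_union_right _ hj, hij, rfl⟩
end

section
/- Let S₁,...,S_K and T₁,...,T_L be subsets of {1,...,M}, each of cardinality strictly greater than M/2. If every S_k is contained in the union T₁ ∪ ... ∪ T_L, then span(⋃_k D(S_k)) ⊆ span(⋃_l D(T_l)). -/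
lemma aux_mem (M L : ℕ) (T : Fin L → Finset (Fin M)) (l : Fin L) (i m : Fin M)
    (hi : i ∈ T l) (hm : m ∈ T l) :
    Pi.single i (1 : ℝ) - Pi.single m (1 : ℝ) ∈
      Submodule.span ℝ (⋃ l, Dset M (T l)) := by
  by_cases h : i = m
  · subst h; simp
  · apply Submodule.subset_span
    exact Set.mem_iUnion.2 ⟨l, ⟨i, hi, m, hm, h, rfl⟩⟩

/-- If each S_k and each T_l has more than M/2 elements and every S_k is contained in
⋃ T_l, then span(⋃ D(S_k)) ⊆ span(⋃ D(T_l)). -/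
theorem stmt10 (M K L : ℕ) (hM : 1 ≤ M)
    (S : Fin K → Finset (Fin M)) (T : Fin L → Finset (Fin M))
    (hS : ∀ k, (M : ℝ) / 2 < (S k).card) (hT : ∀ l, (M : ℝ) / 2 < (T l).card)
    (hsub : ∀ k, S k ⊆ Finset.univ.biUnion T) :
    Submodule.span ℝ (⋃ k, Dset M (S k)) ≤
      Submodule.span ℝ (⋃ l, Dset M (T l)) := by
  rw [Submodule.span_le]
  rintro v hv
  obtain ⟨k, i, hi, j, hj, hij, rfl⟩ := Set.mem_iUnion.1 hv
  obtain ⟨l, -, hil⟩ := Finset.mem_biUnion.1 (hsub k hi)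
  obtain ⟨l', -, hjl⟩ := Finset.mem_biUnion.1 (hsub k hj)
  -- T l and T l' intersect
  have hinter : (T l ∩ T l').Nonempty := by
    rw [← Finset.card_pos]
    by_contra h
    push_neg at h
    interval_cases hc : (T l ∩ T l').card
    have hu : (T l ∪ T l').card ≤ M := le_trans (Finset.card_le_univ _) (by simp)
    have := Finset.card_inter_add_card_union (T l) (T l')
    rw [hc, zero_add] at this
    have h1 := hT l
    have h2 := hT l'
    have : ((T l).card : ℝ) + (T l').card ≤ M := by
      rw [← Nat.cast_add, ← this]; exact_mod_cast hu
    linarith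
  obtain ⟨m, hmem⟩ := hinter
  have hml : m ∈ T l := Finset.mem_inter.1 hmem |>.1
  have hml' : m ∈ T l' := Finset.mem_inter.1 hmem |>.2
  have : Pi.single i (1 : ℝ) - Pi.single j (1 : ℝ) =
      (((Pi.single i 1 - Pi.single m 1) + (Pi.single m 1 - Pi.single j 1)) : Fin M → ℝ) := by
    abel
  rw [SetLike.mem_coe, this]
  exact Submodule.add_mem _ (aux_mem M L T l i m hil hml) (aux_mem M L T l' m j hml' hjl)
end

section
/- Let A_t be the matrix formed by vertically stacking A(S_{t,1}),...,A(S_{t,N}), and let Ã_{t-1} be formed by stacking A(S_{u,n}) for all u < t and all n, where each S_{u,n} ⊆ {1,...,M} has |S_{u,n}| > M/2. If ⋃_n S_{t,n} ⊆ ⋃_{u<t}⋃_n S_{u,n}, then the row space of A_t is contained in the row space of Ã_{t-1}. -/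
/-- The row of the centered selection matrix A(S) = B(S)F(S) corresponding to the
selected index a ∈ S: its j-th entry is [j = a] - (1/|S|)[j ∈ S]. -/
noncomputable def rowA (M : ℕ) (S : Finset (Fin M)) (a : Fin M) : Fin M → ℝ :=
  fun j => (if j = a then (1 : ℝ) else 0) - (if j ∈ S then ((S.card : ℝ))⁻¹ else 0)

/-- The set of rows of A(S). -/
def rowsOf (M : ℕ) (S : Finset (Fin M)) : Set (Fin M → ℝ) :=
  {v | ∃ a ∈ S, v = rowA M S a}

/-! Each row of A(S) is the average of the differences e_a - e_b over b ∈ S, and each such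
difference is a difference of two rows; hence the row space of A(S) is spanned by
these differences. Two index sets with more than M/2 elements each share an index k, and
e_a - e_b = (e_a - e_k) + (e_k - e_b) splits any difference across the two blocks. -/

open Finset Submodule

def diffsOf (M : ℕ) (S : Finset (Fin M)) : Set (Fin M → ℝ) :=
  {v | ∃ a ∈ S, ∃ b ∈ S, v = Pi.single a 1 - Pi.single b 1}

theorem Finset.inter_nonempty_of_half_card_lt {α : Type*} [Fintype α] [DecidableEq α]
    {s t : Finset α} (hs : (Fintype.card α : ℝ) / 2 < #s) (ht : (Fintype.card α : ℝ) / 2 < #t) :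
    (s ∩ t).Nonempty := by
  refine inter_nonempty_of_card_lt_card_add_card (subset_univ s) (subset_univ t) ?_
  rw [card_univ]
  exact_mod_cast (by linarith : (Fintype.card α : ℝ) < #s + #t)

theorem rowA_sub_rowA (M : ℕ) (S : Finset (Fin M)) (a b : Fin M) :
    rowA M S a - rowA M S b = Pi.single a 1 - Pi.single b 1 := by
  funext j
  simp only [rowA, Pi.sub_apply, Pi.single_apply]
  ring

theorem rowA_eq_smul_sum {M : ℕ} {S : Finset (Fin M)} {a : Fin M} (ha : a ∈ S) :
    rowA M S a = (#S : ℝ)⁻¹ • ∑ b ∈ S, (Pi.single a 1 - Pi.single b 1 : Fin M → ℝ) := by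
  have hS : (#S : ℝ) ≠ 0 := Nat.cast_ne_zero.mpr (card_ne_zero_of_mem ha)
  funext j
  simp only [rowA, Pi.smul_apply, Finset.sum_apply, Pi.sub_apply, Pi.single_apply, smul_eq_mul]
  rw [sum_sub_distrib, sum_const, sum_ite_eq, nsmul_eq_mul]
  split_ifs <;> field_simp <;> ring

theorem span_rowsOf_eq_span_diffsOf (M : ℕ) (S : Finset (Fin M)) :
    span ℝ (rowsOf M S) = span ℝ (diffsOf M S) := by
  apply le_antisymm <;> rw [span_le]
  · rintro _ ⟨a, ha, rfl⟩
    rw [rowA_eq_smul_sum ha]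
    exact smul_mem _ _ (sum_mem fun b hb => subset_span ⟨a, ha, b, hb, rfl⟩)
  · rintro _ ⟨a, ha, b, hb, rfl⟩
    rw [← rowA_sub_rowA M S]
    exact sub_mem (subset_span ⟨a, ha, rfl⟩) (subset_span ⟨b, hb, rfl⟩)

theorem single_sub_single_mem_span_rowsOf {M : ℕ} {S : Finset (Fin M)} {a b : Fin M}
    (ha : a ∈ S) (hb : b ∈ S) :
    (Pi.single a 1 - Pi.single b 1 : Fin M → ℝ) ∈ span ℝ (rowsOf M S) := by
  rw [span_rowsOf_eq_span_diffsOf]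
  exact subset_span ⟨a, ha, b, hb, rfl⟩

theorem single_sub_single_mem_of_inter_nonempty {M : ℕ} {S T : Finset (Fin M)}
    {P : Submodule ℝ (Fin M → ℝ)} (hSP : span ℝ (rowsOf M S) ≤ P)
    (hTP : span ℝ (rowsOf M T) ≤ P) (hST : (S ∩ T).Nonempty) {a b : Fin M}
    (ha : a ∈ S) (hb : b ∈ T) : (Pi.single a 1 - Pi.single b 1 : Fin M → ℝ) ∈ P := by
  obtain ⟨k, hk⟩ := hST
  obtain ⟨hkS, hkT⟩ := mem_inter.mp hk
  have hsplit : (Pi.single a 1 - Pi.single b 1 : Fin M → ℝ) =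
      (Pi.single a 1 - Pi.single k 1) + (Pi.single k 1 - Pi.single b 1) := by abel
  rw [hsplit]
  exact add_mem (hSP (single_sub_single_mem_span_rowsOf ha hkS))
    (hTP (single_sub_single_mem_span_rowsOf hkT hb))

theorem stmt11_general (M N t : ℕ)
    (St : Fin N → Finset (Fin M)) (Sp : Fin t → Fin N → Finset (Fin M))
    (hSp : ∀ u n, (M : ℝ) / 2 < (Sp u n).card)
    (hsub : Finset.univ.biUnion St ⊆
      Finset.univ.biUnion (fun u => Finset.univ.biUnion (Sp u))) :
    Submodule.span ℝ (⋃ n, rowsOf M (St n)) ≤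
      Submodule.span ℝ (⋃ u, ⋃ n, rowsOf M (Sp u n)) := by
  set P := span ℝ (⋃ u, ⋃ n, rowsOf M (Sp u n))
  have hblock : ∀ u n, span ℝ (rowsOf M (Sp u n)) ≤ P := fun u n =>
    span_mono (Set.subset_iUnion_of_subset u (Set.subset_iUnion (rowsOf M ∘ Sp u) n))
  have hearlier : ∀ {a}, a ∈ univ.biUnion St → ∃ u n, a ∈ Sp u n := fun ha => by
    simpa only [mem_biUnion, mem_univ, true_and] using hsub ha
  rw [span_iUnion, iSup_le_iff]
  intro n
  rw [span_rowsOf_eq_span_diffsOf, span_le]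
  rintro _ ⟨a, ha, b, hb, rfl⟩
  obtain ⟨u, m, ha'⟩ := hearlier (mem_biUnion.mpr ⟨n, mem_univ n, ha⟩)
  obtain ⟨u', m', hb'⟩ := hearlier (mem_biUnion.mpr ⟨n, mem_univ n, hb⟩)
  refine single_sub_single_mem_of_inter_nonempty (hblock u m) (hblock u' m') ?_ ha' hb'
  exact inter_nonempty_of_half_card_lt (by simpa using hSp u m) (by simpa using hSp u' m')

/-- If each block index set has more than M/2 elements and the index sets at time t are
contained in the union of all earlier index sets, then the row space of the stacked
matrix A_t is contained in the row space of the stacked matrix Ã_{t-1}. -/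
theorem stmt11 (M N t : ℕ) (hM : 1 ≤ M)
    (St : Fin N → Finset (Fin M)) (Sp : Fin t → Fin N → Finset (Fin M))
    (hSt : ∀ n, (M : ℝ) / 2 < (St n).card)
    (hSp : ∀ u n, (M : ℝ) / 2 < (Sp u n).card)
    (hsub : Finset.univ.biUnion St ⊆
      Finset.univ.biUnion (fun u => Finset.univ.biUnion (Sp u))) :
    Submodule.span ℝ (⋃ n, rowsOf M (St n)) ≤
      Submodule.span ℝ (⋃ u, ⋃ n, rowsOf M (Sp u n)) :=
  stmt11_general M N t St Sp hSp hsub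
end
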